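/- arXiv:1009.5409 — 4 statements merged into one kernel-verified Lean document; each statement's English description precedes it below -/
import Mathlib

section
/- Let A₀, …, A_q be a symmetric Clifford system on ℝ^{2m}, i.e. symmetric endomorphisms satisfying A_iA_j + A_jA_i = 2δ_{ij}·Id. Then for the Clifford cubic f(x) = Σ_{i=0}^{q} ⟨y, A_i y⟩ x_{i+1} with y = (x_{q+2},…,x_{q+1+2m}), one has trace(Hess f)² = 8(m|z|² + (q+1)|y|²), where z = (x₁,…,x_{q+1}). -/
open Matrix

/-- The Hessian matrix of a function `f : ℝⁿ → ℝ` at a point `x`. -/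
noncomputable def hessian {n : ℕ} (f : (Fin n → ℝ) → ℝ) (x : Fin n → ℝ) :
    Matrix (Fin n) (Fin n) ℝ :=
  fun i j => fderiv ℝ (fun y => fderiv ℝ f y (Pi.single j 1)) x (Pi.single i 1)

variable {n : ℕ} {ι : Type*} [Fintype ι]

noncomputable def pr (j : Fin n) : (Fin n → ℝ) →L[ℝ] ℝ := ContinuousLinearMap.proj j

@[simp] lemma pr_apply (j : Fin n) (v : Fin n → ℝ) : pr j v = v j := rfl

lemma hasFDerivAt_coord (j : Fin n) (x : Fin n → ℝ) :
    HasFDerivAt (fun y : Fin n → ℝ => y j) (pr j) x :=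
  (pr j).hasFDerivAt

lemma cubic_hasFDerivAt (c : ι → ℝ) (a b d : ι → Fin n) (x : Fin n → ℝ) :
    HasFDerivAt (fun y : Fin n → ℝ => ∑ s, c s * (y (a s) * y (b s) * y (d s)))
      (∑ s, c s • ((x (b s) * x (d s)) • pr (a s)
        + (x (a s) * x (d s)) • pr (b s)
        + (x (a s) * x (b s)) • pr (d s))) x := by
  apply HasFDerivAt.fun_sum
  intro s _
  have h := (((hasFDerivAt_coord (a s) x).fun_mul (hasFDerivAt_coord (b s) x)).fun_mul
      (hasFDerivAt_coord (d s) x)).const_mul (c s)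
  refine h.congr_fderiv ?_
  ext v
  simp
  ring

/-- Kronecker delta -/
def dl (p i : Fin n) : ℝ := if p = i then 1 else 0

@[simp] lemma single_apply' (j p : Fin n) : (Pi.single j 1 : Fin n → ℝ) p = dl p j := by
  simp [dl, Pi.single_apply]

lemma grad_eq (c : ι → ℝ) (a b d : ι → Fin n) (j : Fin n) :
    (fun y => fderiv ℝ (fun y : Fin n → ℝ => ∑ s, c s * (y (a s) * y (b s) * y (d s))) y
        (Pi.single j 1))
      = fun y : Fin n → ℝ => ∑ s, c s * (dl (a s) j * (y (b s) * y (d s))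
          + dl (b s) j * (y (a s) * y (d s)) + dl (d s) j * (y (a s) * y (b s))) := by
  funext y
  rw [(cubic_hasFDerivAt c a b d y).fderiv]
  simp [mul_comm, mul_left_comm, mul_assoc, mul_add]

lemma quad_hasFDerivAt (c1 c2 c3 : ι → ℝ) (a b d : ι → Fin n) (x : Fin n → ℝ) :
    HasFDerivAt (fun y : Fin n → ℝ => ∑ s, (c1 s * (y (b s) * y (d s))
        + c2 s * (y (a s) * y (d s)) + c3 s * (y (a s) * y (b s))))
      (∑ s, (c1 s • (x (d s) • pr (b s) + x (b s) • pr (d s))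
        + c2 s • (x (d s) • pr (a s) + x (a s) • pr (d s))
        + c3 s • (x (b s) • pr (a s) + x (a s) • pr (b s)))) x := by
  apply HasFDerivAt.fun_sum
  intro s _
  have h := (((hasFDerivAt_coord (b s) x).fun_mul (hasFDerivAt_coord (d s) x)).const_mul (c1 s)).fun_add
    ((((hasFDerivAt_coord (a s) x).fun_mul (hasFDerivAt_coord (d s) x)).const_mul (c2 s)).fun_add
     (((hasFDerivAt_coord (a s) x).fun_mul (hasFDerivAt_coord (b s) x)).const_mul (c3 s)))
  convert h using 1
  · funext y; ring
  · ext v; simp; ring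

lemma hessian_cubic (c : ι → ℝ) (a b d : ι → Fin n) (x : Fin n → ℝ) (i j : Fin n) :
    hessian (fun y => ∑ s, c s * (y (a s) * y (b s) * y (d s))) x i j
      = ∑ s, c s * (dl (a s) j * (dl (b s) i * x (d s) + dl (d s) i * x (b s))
          + dl (b s) j * (dl (a s) i * x (d s) + dl (d s) i * x (a s))
          + dl (d s) j * (dl (a s) i * x (b s) + dl (b s) i * x (a s))) := by
  unfold hessian
  rw [grad_eq c a b d j]
  have h2 := quad_hasFDerivAt (fun s => c s * dl (a s) j) (fun s => c s * dl (b s) j)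
    (fun s => c s * dl (d s) j) a b d x
  have : (fun y : Fin n → ℝ => ∑ s, c s * (dl (a s) j * (y (b s) * y (d s))
          + dl (b s) j * (y (a s) * y (d s)) + dl (d s) j * (y (a s) * y (b s))))
      = fun y : Fin n → ℝ => ∑ s, ((c s * dl (a s) j) * (y (b s) * y (d s))
          + (c s * dl (b s) j) * (y (a s) * y (d s)) + (c s * dl (d s) j) * (y (a s) * y (b s))) := by
    funext y; congr 1; funext s; ring
  rw [this, h2.fderiv]
  simp
  congr 1; funext s; ring

section main
variable {q m : ℕ}

local notation "C" => Fin.castAdd (2*m) 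
local notation "N" => Fin.natAdd (q+1)

@[simp] lemma dl_NC (k : Fin (2*m)) (i : Fin (q+1)) : dl (N k) (C i) = 0 := by
  simp only [dl, ite_eq_right_iff]
  intro h; exfalso
  have := congrArg Fin.val h
  simp at this; omega

@[simp] lemma dl_CN (k : Fin (2*m)) (i : Fin (q+1)) : dl (C i) (N k) = 0 := by
  simp only [dl, ite_eq_right_iff]
  intro h; exfalso
  have := congrArg Fin.val h
  simp at this; omega

@[simp] lemma dl_NN (k l : Fin (2*m)) : dl (N k) (N l) = if k = l then 1 else 0 := by
  simp only [dl, Fin.ext_iff]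
  simp

@[simp] lemma dl_CC (i j : Fin (q+1)) : dl (C i) (C j) = if i = j then 1 else 0 := by
  simp only [dl, Fin.ext_iff]
  simp

end main


/-- For a symmetric Clifford system `A₀, …, A_q` on `ℝ^{2m}` and the associated
Clifford cubic `f(x) = Σᵢ ⟨y, Aᵢ y⟩ x_{i+1}` on `ℝ^{q+1+2m}` (with `z` the first
`q+1` coordinates and `y` the last `2m`), one has
`trace (Hess f)² = 8 (m |z|² + (q+1) |y|²)`. -/

theorem clifford_cubic_trace_sq (m q : ℕ)
    (A : Fin (q + 1) → Matrix (Fin (2 * m)) (Fin (2 * m)) ℝ)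
    (hsymm : ∀ i, (A i)ᵀ = A i)
    (hcliff : ∀ i j, A i * A j + A j * A i
      = if i = j then (2 : ℝ) • (1 : Matrix (Fin (2 * m)) (Fin (2 * m)) ℝ) else 0)
    (f : (Fin (q + 1 + 2 * m) → ℝ) → ℝ)
    (hf : f = fun x =>
      ∑ i : Fin (q + 1),
        ((fun k => x (Fin.natAdd (q + 1) k)) ⬝ᵥ
          (A i *ᵥ fun k => x (Fin.natAdd (q + 1) k))) * x (Fin.castAdd (2 * m) i)) :
    ∀ x : Fin (q + 1 + 2 * m) → ℝ,
      Matrix.trace (hessian f x ^ 2)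
        = 8 * ((m : ℝ) * ∑ i : Fin (q + 1), x (Fin.castAdd (2 * m) i) ^ 2
            + ((q : ℝ) + 1) * ∑ k : Fin (2 * m), x (Fin.natAdd (q + 1) k) ^ 2) := by
  intro x
  -- abbreviations
  have hAA : ∀ i, A i * A i = 1 := by
    intro i
    have h := hcliff i i
    rw [if_pos rfl] at h
    have h2 : (2:ℝ) • (A i * A i) = (2:ℝ) • (1 : Matrix (Fin (2*m)) (Fin (2*m)) ℝ) := by
      rw [two_smul]; exact h
    exact smul_right_injective _ (two_ne_zero) h2
  have hf' : f = fun y => ∑ s : Fin (q+1) × Fin (2*m) × Fin (2*m),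
      A s.1 s.2.1 s.2.2 * (y (Fin.natAdd (q+1) s.2.1) * y (Fin.natAdd (q+1) s.2.2)
        * y (Fin.castAdd (2*m) s.1)) := by
    rw [hf]; funext y
    simp only [Fintype.sum_prod_type, dotProduct, mulVec, Finset.sum_mul, Finset.mul_sum]
    refine Finset.sum_congr rfl fun i _ => Finset.sum_congr rfl fun k _ =>
      Finset.sum_congr rfl fun l _ => by ring
  have key : ∀ i j, hessian f x i j
      = ∑ s : Fin (q+1) × Fin (2*m) × Fin (2*m), A s.1 s.2.1 s.2.2 *
          (dl (Fin.natAdd (q+1) s.2.1) j * (dl (Fin.natAdd (q+1) s.2.2) i * x (Fin.castAdd (2*m) s.1)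
              + dl (Fin.castAdd (2*m) s.1) i * x (Fin.natAdd (q+1) s.2.2))
          + dl (Fin.natAdd (q+1) s.2.2) j * (dl (Fin.natAdd (q+1) s.2.1) i * x (Fin.castAdd (2*m) s.1)
              + dl (Fin.castAdd (2*m) s.1) i * x (Fin.natAdd (q+1) s.2.1))
          + dl (Fin.castAdd (2*m) s.1) j * (dl (Fin.natAdd (q+1) s.2.1) i * x (Fin.natAdd (q+1) s.2.2)
              + dl (Fin.natAdd (q+1) s.2.2) i * x (Fin.natAdd (q+1) s.2.1))) := by
    intro i j
    rw [hf']
    exact hessian_cubic (ι := Fin (q+1) × Fin (2*m) × Fin (2*m))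
      (fun s => A s.1 s.2.1 s.2.2) (fun s => Fin.natAdd (q+1) s.2.1)
      (fun s => Fin.natAdd (q+1) s.2.2) (fun s => Fin.castAdd (2*m) s.1) x i j
  have hs : ∀ i k l, A i l k = A i k l := by
    intro i k l
    exact congrFun (congrFun (hsymm i) k) l
  have hCC : ∀ i j, hessian f x (Fin.castAdd (2*m) i) (Fin.castAdd (2*m) j) = 0 := by
    intro i j; rw [key]
    apply Finset.sum_eq_zero; intro s _
    simp
  have hCN : ∀ i k, hessian f x (Fin.castAdd (2*m) i) (Fin.natAdd (q+1) k)
      = 2 * ∑ l, A i k l * x (Fin.natAdd (q+1) l) := by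
    intro i k
    rw [key, Fintype.sum_prod_type]
    simp only [dl_NC, dl_CN, dl_NN, dl_CC, mul_ite, ite_mul, one_mul, zero_mul, mul_zero,
      zero_add, add_zero, mul_one, mul_zero, Finset.sum_ite_eq, Finset.sum_ite_eq',
      Finset.mem_univ, if_true]
    rw [Finset.sum_eq_single i ?_ (by simp)]
    · simp only [if_pos rfl, Fintype.sum_prod_type, mul_add, Finset.sum_add_distrib,
        mul_ite, mul_zero, Finset.sum_ite_eq', Finset.mem_univ, if_true]
      have h2 : (∑ k' : Fin (2*m), A i k' k * x (Fin.natAdd (q+1) k'))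
          = ∑ k' : Fin (2*m), A i k k' * x (Fin.natAdd (q+1) k') :=
        Finset.sum_congr rfl fun k' _ => by rw [hs]
      have h3 : (∑ x1 : Fin (2*m), ∑ x2 : Fin (2*m),
            if x1 = k then A i x1 x2 * x (Fin.natAdd (q+1) x2) else 0)
          = ∑ x2 : Fin (2*m), A i k x2 * x (Fin.natAdd (q+1) x2) := by
        rw [Finset.sum_eq_single k ?_ (by simp)]
        · simp
        · intro b _ hb; simp [if_neg hb]
      rw [h2, h3]; ring
    · intro b _ hb
      simp [if_neg hb]
  have hNC : ∀ i k, hessian f x (Fin.natAdd (q+1) k) (Fin.castAdd (2*m) i)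
      = 2 * ∑ l, A i k l * x (Fin.natAdd (q+1) l) := by
    intro i k
    rw [key, Fintype.sum_prod_type]
    simp only [dl_NC, dl_CN, dl_NN, dl_CC, mul_ite, ite_mul, one_mul, zero_mul, mul_zero,
      zero_add, add_zero, mul_one, mul_zero, Finset.sum_ite_eq, Finset.sum_ite_eq',
      Finset.mem_univ, if_true, ite_self, zero_add]
    rw [Finset.sum_eq_single i ?_ (by simp)]
    · simp only [if_pos rfl, Fintype.sum_prod_type, mul_add, Finset.sum_add_distrib,
        mul_ite, mul_zero, Finset.sum_ite_eq', Finset.mem_univ, if_true]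
      have h2 : (∑ k' : Fin (2*m), A i k' k * x (Fin.natAdd (q+1) k'))
          = ∑ k' : Fin (2*m), A i k k' * x (Fin.natAdd (q+1) k') :=
        Finset.sum_congr rfl fun k' _ => by rw [hs]
      have h3 : (∑ x1 : Fin (2*m), ∑ x2 : Fin (2*m),
            if x1 = k then A i x1 x2 * x (Fin.natAdd (q+1) x2) else 0)
          = ∑ x2 : Fin (2*m), A i k x2 * x (Fin.natAdd (q+1) x2) := by
        rw [Finset.sum_eq_single k ?_ (by simp)]
        · simp
        · intro b _ hb; simp [if_neg hb]
      rw [h2, h3]; ring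
    · intro b _ hb
      simp [if_neg hb]
  have hNN : ∀ k l, hessian f x (Fin.natAdd (q+1) k) (Fin.natAdd (q+1) l)
      = 2 * ∑ t, A t k l * x (Fin.castAdd (2*m) t) := by
    intro k l
    rw [key, Fintype.sum_prod_type]
    simp only [dl_NC, dl_CN, dl_NN, dl_CC, mul_ite, ite_mul, one_mul, zero_mul, mul_zero,
      zero_add, add_zero, mul_one, mul_zero, Finset.sum_ite_eq, Finset.sum_ite_eq',
      Finset.mem_univ, if_true, Fintype.sum_prod_type, mul_add, mul_ite, mul_zero,
      Finset.sum_add_distrib, Finset.sum_ite_irrel, Finset.sum_const_zero, ite_self,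
      add_zero, zero_add]
    have h2 : (∑ t, A t l k * x (Fin.castAdd (2*m) t))
        = ∑ t, A t k l * x (Fin.castAdd (2*m) t) :=
      Finset.sum_congr rfl fun t _ => by rw [hs]
    rw [h2]; ring
  -- quadratic identities
  set u : Fin (2*m) → ℝ := fun k => x (Fin.natAdd (q+1) k) with hu
  have P1 : ∀ i, ∑ k, (∑ l, A i k l * u l) * (∑ l, A i k l * u l) = ∑ k, u k^2 := by
    intro i
    have e : (A i *ᵥ u) ⬝ᵥ (A i *ᵥ u) = u ⬝ᵥ u := by
      have h1 : A i *ᵥ u = u ᵥ* A i := by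
        conv_lhs => rw [← hsymm i]
        rw [Matrix.mulVec_transpose]
      nth_rewrite 1 [h1]
      rw [← Matrix.dotProduct_mulVec, Matrix.mulVec_mulVec, hAA i, Matrix.one_mulVec]
    simpa [dotProduct, mulVec, sq] using e
  have htr : ∀ t t', Matrix.trace (A t * A t') = if t = t' then (2*(m:ℝ)) else 0 := by
    intro t t'
    have h := congrArg Matrix.trace (hcliff t t')
    rw [Matrix.trace_add, Matrix.trace_mul_comm (A t') (A t)] at h
    by_cases hte : t = t'
    · subst hte
      rw [if_pos rfl, Matrix.trace_smul, Matrix.trace_one] at h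
      rw [if_pos rfl]
      simp only [smul_eq_mul, Fintype.card_fin, Nat.cast_mul, Nat.cast_ofNat] at h
      linarith
    · rw [if_neg hte, Matrix.trace_zero] at h
      rw [if_neg hte]; linarith
  have P2 : ∑ k, ∑ l, (∑ t, A t k l * x (Fin.castAdd (2*m) t))
        * (∑ t, A t l k * x (Fin.castAdd (2*m) t))
      = (2*(m:ℝ)) * ∑ t, x (Fin.castAdd (2*m) t)^2 := by
    set M := ∑ t, x (Fin.castAdd (2*m) t) • A t with hM
    have e1 : ∑ k, ∑ l, (∑ t, A t k l * x (Fin.castAdd (2*m) t))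
          * (∑ t, A t l k * x (Fin.castAdd (2*m) t)) = Matrix.trace (M * M) := by
      simp only [Matrix.trace, Matrix.diag_apply, Matrix.mul_apply, hM, Matrix.sum_apply,
        Matrix.smul_apply, smul_eq_mul]
      exact Finset.sum_congr rfl fun k _ => Finset.sum_congr rfl fun l _ => by
        congr 1 <;> exact Finset.sum_congr rfl fun t _ => by ring
    have e2 : M * M = ∑ t, ∑ t', (x (Fin.castAdd (2*m) t) * x (Fin.castAdd (2*m) t'))
        • (A t * A t') := by
      rw [hM, Finset.sum_mul]
      refine Finset.sum_congr rfl fun t _ => ?_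
      rw [Finset.mul_sum]
      refine Finset.sum_congr rfl fun t' _ => ?_
      rw [smul_mul_assoc, mul_smul_comm, smul_smul]
    rw [e1, e2]
    simp only [Matrix.trace_sum, Matrix.trace_smul, smul_eq_mul, htr, mul_ite, mul_zero,
      Finset.sum_ite_eq', Finset.sum_ite_eq, Finset.mem_univ, if_true]
    rw [Finset.mul_sum]
    exact Finset.sum_congr rfl fun t _ => by ring
  -- assemble the trace
  have split : ∀ g : Fin (q+1+2*m) → ℝ, (∑ p, g p)
      = (∑ i : Fin (q+1), g (Fin.castAdd (2*m) i)) + ∑ k : Fin (2*m), g (Fin.natAdd (q+1) k) :=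
    fun g => Fin.sum_univ_add g
  have T1 : Matrix.trace (hessian f x ^ 2)
      = ∑ p, ∑ r, hessian f x p r * hessian f x r p := by
    rw [sq, Matrix.trace]
    simp only [Matrix.diag_apply, Matrix.mul_apply]
  rw [T1, split]
  have s1 : (∑ i : Fin (q+1), ∑ r, hessian f x (Fin.castAdd (2*m) i) r
        * hessian f x r (Fin.castAdd (2*m) i))
      = ∑ i : Fin (q+1), ((∑ j : Fin (q+1), hessian f x (Fin.castAdd (2*m) i) (Fin.castAdd (2*m) j)
            * hessian f x (Fin.castAdd (2*m) j) (Fin.castAdd (2*m) i))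
          + ∑ k : Fin (2*m), hessian f x (Fin.castAdd (2*m) i) (Fin.natAdd (q+1) k)
            * hessian f x (Fin.natAdd (q+1) k) (Fin.castAdd (2*m) i)) :=
    Finset.sum_congr rfl fun i _ => split _
  have s2 : (∑ k : Fin (2*m), ∑ r, hessian f x (Fin.natAdd (q+1) k) r
        * hessian f x r (Fin.natAdd (q+1) k))
      = ∑ k : Fin (2*m), ((∑ i : Fin (q+1), hessian f x (Fin.natAdd (q+1) k) (Fin.castAdd (2*m) i)
            * hessian f x (Fin.castAdd (2*m) i) (Fin.natAdd (q+1) k))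
          + ∑ l : Fin (2*m), hessian f x (Fin.natAdd (q+1) k) (Fin.natAdd (q+1) l)
            * hessian f x (Fin.natAdd (q+1) l) (Fin.natAdd (q+1) k)) :=
    Finset.sum_congr rfl fun k _ => split _
  rw [s1, s2]
  simp only [hCC, hCN, hNC, hNN, mul_zero, zero_mul, Finset.sum_const_zero, zero_add, add_zero]
  rw [Finset.sum_add_distrib]
  have P1' : ∀ i, ∑ k, (∑ l, A i k l * x (Fin.natAdd (q+1) l))
      * (∑ l, A i k l * x (Fin.natAdd (q+1) l)) = ∑ k, x (Fin.natAdd (q+1) k)^2 := by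
    simpa [hu] using P1
  have e4 : ∀ i : Fin (q+1), (∑ k : Fin (2*m),
        (2 * ∑ l, A i k l * x (Fin.natAdd (q+1) l))
        * (2 * ∑ l, A i k l * x (Fin.natAdd (q+1) l)))
      = 4 * ∑ k, x (Fin.natAdd (q+1) k)^2 := by
    intro i
    rw [← P1' i, Finset.mul_sum]
    exact Finset.sum_congr rfl fun k _ => by ring
  have hA : (∑ i : Fin (q+1), ∑ k : Fin (2*m),
        (2 * ∑ l, A i k l * x (Fin.natAdd (q+1) l))
        * (2 * ∑ l, A i k l * x (Fin.natAdd (q+1) l)))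
      = ((q:ℝ)+1) * (4 * ∑ k, x (Fin.natAdd (q+1) k)^2) := by
    rw [Finset.sum_congr rfl fun i _ => e4 i, Finset.sum_const, Finset.card_univ,
      Fintype.card_fin, nsmul_eq_mul]
    push_cast; ring
  have hB : (∑ k : Fin (2*m), ∑ i : Fin (q+1),
        (2 * ∑ l, A i k l * x (Fin.natAdd (q+1) l))
        * (2 * ∑ l, A i k l * x (Fin.natAdd (q+1) l)))
      = ((q:ℝ)+1) * (4 * ∑ k, x (Fin.natAdd (q+1) k)^2) := by
    rw [Finset.sum_comm]; exact hA
  have hC : (∑ k : Fin (2*m), ∑ l : Fin (2*m),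
        (2 * ∑ t, A t k l * x (Fin.castAdd (2*m) t))
        * (2 * ∑ t, A t l k * x (Fin.castAdd (2*m) t)))
      = 4 * ((2*(m:ℝ)) * ∑ t, x (Fin.castAdd (2*m) t)^2) := by
    rw [← P2, Finset.mul_sum]
    exact Finset.sum_congr rfl fun k _ => by
      rw [Finset.mul_sum]
      exact Finset.sum_congr rfl fun l _ => by ring
  rw [hA, hB, hC]
  ring
end

section
/- Let f(x) = det of the 3×3 matrix with rows (x₁,x₂,x₃), (x₄,x₅,x₆), (x₇,x₈,x₉) on ℝ⁹. Then f satisfies L(f) = −2|x|²f, where L(f) = |∇f|²Δf − Σ_{i,j} f_{x_i} f_{x_j} f_{x_i x_j}. -/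
open Matrix

/-- The gradient (partial derivatives) of `f : ℝⁿ → ℝ` at `x`. -/
noncomputable def grad {n : ℕ} (f : (Fin n → ℝ) → ℝ) (x : Fin n → ℝ) : Fin n → ℝ :=
  fun i => fderiv ℝ f x (Pi.single i 1)

private lemma cv_9_5 {α : Type*} (a : α) (u : Fin 8 → α) :
    Matrix.vecCons a u 5 = u 4 := rfl

private lemma cv_9_6 {α : Type*} (a : α) (u : Fin 8 → α) :
    Matrix.vecCons a u 6 = u 5 := rfl

private lemma cv_9_7 {α : Type*} (a : α) (u : Fin 8 → α) :
    Matrix.vecCons a u 7 = u 6 := rfl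

private lemma cv_9_8 {α : Type*} (a : α) (u : Fin 8 → α) :
    Matrix.vecCons a u 8 = u 7 := rfl

private lemma cv_8_5 {α : Type*} (a : α) (u : Fin 7 → α) :
    Matrix.vecCons a u 5 = u 4 := rfl

private lemma cv_8_6 {α : Type*} (a : α) (u : Fin 7 → α) :
    Matrix.vecCons a u 6 = u 5 := rfl

private lemma cv_8_7 {α : Type*} (a : α) (u : Fin 7 → α) :
    Matrix.vecCons a u 7 = u 6 := rfl

private lemma cv_7_5 {α : Type*} (a : α) (u : Fin 6 → α) :
    Matrix.vecCons a u 5 = u 4 := rfl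

private lemma cv_7_6 {α : Type*} (a : α) (u : Fin 6 → α) :
    Matrix.vecCons a u 6 = u 5 := rfl

private lemma cv_6_5 {α : Type*} (a : α) (u : Fin 5 → α) :
    Matrix.vecCons a u 5 = u 4 := rfl


private lemma mk9_0 (h : 0 < 9) : (⟨0, h⟩ : Fin 9) = 0 := rfl

private lemma mk9_1 (h : 1 < 9) : (⟨1, h⟩ : Fin 9) = 1 := rfl

private lemma mk9_2 (h : 2 < 9) : (⟨2, h⟩ : Fin 9) = 2 := rfl

private lemma mk9_3 (h : 3 < 9) : (⟨3, h⟩ : Fin 9) = 3 := rfl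

private lemma mk9_4 (h : 4 < 9) : (⟨4, h⟩ : Fin 9) = 4 := rfl

private lemma mk9_5 (h : 5 < 9) : (⟨5, h⟩ : Fin 9) = 5 := rfl

private lemma mk9_6 (h : 6 < 9) : (⟨6, h⟩ : Fin 9) = 6 := rfl

private lemma mk9_7 (h : 7 < 9) : (⟨7, h⟩ : Fin 9) = 7 := rfl

private lemma mk9_8 (h : 8 < 9) : (⟨8, h⟩ : Fin 9) = 8 := rfl

private lemma sum9 (g : Fin 9 → ℝ) :
    ∑ i, g i = g 0 + g 1 + g 2 + g 3 + g 4 + g 5 + g 6 + g 7 + g 8 := by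
  rw [Fin.sum_univ_castSucc, Fin.sum_univ_eight]
  rfl

set_option maxHeartbeats 2000000 in
/-- The `3×3` determinant cubic on `ℝ⁹` satisfies `L(f) = −2|x|² f`, where
`L(f) = |∇f|²Δf − (∇f)ᵀ Hess(f) ∇f` is the normalized mean curvature operator. -/
theorem det_cubic_radial_eigencubic
    (f : (Fin 9 → ℝ) → ℝ)
    (hf : f = fun x => x 0 * (x 4 * x 8 - x 5 * x 7)
      - x 1 * (x 3 * x 8 - x 5 * x 6) + x 2 * (x 3 * x 7 - x 4 * x 6)) :
    ∀ x : Fin 9 → ℝ,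
      (∑ i, grad f x i ^ 2) * Matrix.trace (hessian f x)
        - ∑ i, ∑ j, grad f x i * grad f x j * hessian f x i j
      = -2 * (∑ i, x i ^ 2) * f x := by
  have hi : ∀ (i : Fin 9) (y : Fin 9 → ℝ), HasFDerivAt (fun z : Fin 9 → ℝ => z i)
      (ContinuousLinearMap.proj i : (Fin 9 → ℝ) →L[ℝ] ℝ) y := by
    intro i y; exact hasFDerivAt_apply i y
  -- derivative of a quadratic monomial difference
  have hq : ∀ (a b c d : Fin 9) (y v : Fin 9 → ℝ),
      fderiv ℝ (fun z : Fin 9 → ℝ => z a * z b - z c * z d) y v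
        = v a * y b + y a * v b - (v c * y d + y c * v d) := by
    intro a b c d y v
    erw [(((hi a y).mul (hi b y)).sub ((hi c y).mul (hi d y))).fderiv]
    simp
    ring
  -- derivative of f itself
  have hg : ∀ y v : Fin 9 → ℝ, fderiv ℝ f y v =
      v 0 * (y 4 * y 8 - y 5 * y 7)
        + y 0 * (v 4 * y 8 + y 4 * v 8 - (v 5 * y 7 + y 5 * v 7))
      - (v 1 * (y 3 * y 8 - y 5 * y 6)
        + y 1 * (v 3 * y 8 + y 3 * v 8 - (v 5 * y 6 + y 5 * v 6)))
      + (v 2 * (y 3 * y 7 - y 4 * y 6)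
        + y 2 * (v 3 * y 7 + y 3 * v 7 - (v 4 * y 6 + y 4 * v 6))) := by
    subst hf
    intro y v
    erw [((((hi 0 y).mul (((hi 4 y).mul (hi 8 y)).sub ((hi 5 y).mul (hi 7 y)))).sub
        ((hi 1 y).mul (((hi 3 y).mul (hi 8 y)).sub ((hi 5 y).mul (hi 6 y))))).add
        ((hi 2 y).mul (((hi 3 y).mul (hi 7 y)).sub ((hi 4 y).mul (hi 6 y))))).fderiv]
    simp
    ring
  -- explicit gradient
  have hgradv : ∀ y : Fin 9 → ℝ, grad f y =
      ![y 4 * y 8 - y 5 * y 7, y 5 * y 6 - y 3 * y 8, y 3 * y 7 - y 4 * y 6,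
        y 2 * y 7 - y 1 * y 8, y 0 * y 8 - y 2 * y 6, y 1 * y 6 - y 0 * y 7,
        y 1 * y 5 - y 2 * y 4, y 2 * y 3 - y 0 * y 5, y 0 * y 4 - y 1 * y 3] := by
    intro y
    funext j
    simp only [grad]
    rw [hg]
    fin_cases j <;> simp [Pi.single_apply, cv_9_5, cv_9_6, cv_9_7, cv_9_8, cv_8_5, cv_8_6, cv_8_7, cv_7_5, cv_7_6, cv_6_5] <;> ring
  -- explicit hessian
  have hhessv : ∀ x : Fin 9 → ℝ, hessian f x =
      !![0,0,0,0,x 8,-(x 7),0,-(x 5),x 4;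
         0,0,0,-(x 8),0,x 6,x 5,0,-(x 3);
         0,0,0,x 7,-(x 6),0,-(x 4),x 3,0;
         0,-(x 8),x 7,0,0,0,0,x 2,-(x 1);
         x 8,0,-(x 6),0,0,0,-(x 2),0,x 0;
         -(x 7),x 6,0,0,0,0,x 1,-(x 0),0;
         0,x 5,-(x 4),0,-(x 2),x 1,0,0,0;
         -(x 5),0,x 3,x 2,0,-(x 0),0,0,0;
         x 4,-(x 3),0,-(x 1),x 0,0,0,0,0] := by
    intro x
    funext i j
    simp only [hessian]
    have hcol : (fun y => fderiv ℝ f y (Pi.single j 1)) = fun y => grad f y j := rfl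
    rw [hcol]
    have hcol2 : (fun y => grad f y j) =
        fun y => (![y 4 * y 8 - y 5 * y 7, y 5 * y 6 - y 3 * y 8, y 3 * y 7 - y 4 * y 6,
          y 2 * y 7 - y 1 * y 8, y 0 * y 8 - y 2 * y 6, y 1 * y 6 - y 0 * y 7,
          y 1 * y 5 - y 2 * y 4, y 2 * y 3 - y 0 * y 5, y 0 * y 4 - y 1 * y 3]) j :=
      funext fun y => by rw [hgradv]
    rw [hcol2]
    fin_cases j <;>
      simp only [mk9_0, mk9_1, mk9_2, mk9_3, mk9_4, mk9_5, mk9_6, mk9_7, mk9_8, Fin.isValue, Matrix.cons_val_zero, Matrix.cons_val_one, Matrix.head_cons,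
        Matrix.cons_val_two, Matrix.tail_cons, Matrix.cons_val_three,
        Matrix.cons_val_four, cv_9_5, cv_9_6, cv_9_7, cv_9_8, cv_8_5, cv_8_6, cv_8_7, cv_7_5, cv_7_6, cv_6_5, Matrix.cons_val_succ] <;>
      rw [hq] <;>
      fin_cases i <;>
      simp [Pi.single_apply, Matrix.vecHead, Matrix.vecTail, cv_9_5, cv_9_6, cv_9_7, cv_9_8, cv_8_5, cv_8_6, cv_8_7, cv_7_5, cv_7_6, cv_6_5]
  intro x
  rw [hgradv, hhessv, hf]
  rw [Matrix.trace]
  rw [sum9, sum9, sum9]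
  simp only [sum9]
  simp only [Matrix.diag, Matrix.of_apply, Matrix.cons_val_zero, Matrix.cons_val_one,
    Matrix.head_cons, Matrix.cons_val_two, Matrix.tail_cons, Matrix.cons_val_three,
    Matrix.cons_val_four, cv_9_5, cv_9_6, cv_9_7, cv_9_8, cv_8_5, cv_8_6, cv_8_7, cv_7_5, cv_7_6, cv_6_5]
  ring
end

section
/- Let f be a homogeneous cubic polynomial on ℝⁿ which is harmonic and satisfies (∇f)ᵀ·Hess(f)·∇f = −λ|x|²f for a constant λ, and suppose trace(Hess f)² = β|x|² for a constant β. Then trace(Hess f)³ = −((n+6)λ + 6β)·f. -/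
open Matrix

namespace CubicAux
open MvPolynomial

variable {n : ℕ}


lemma pd_comm (i j : Fin n) (p : MvPolynomial (Fin n) ℝ) :
    pderiv i (pderiv j p) = pderiv j (pderiv i p) := by
  induction p using MvPolynomial.induction_on with
  | C a => simp [pderiv_C]
  | add p q hp hq => simp [_root_.map_add, hp, hq]
  | mul_X p k ih =>
      simp only [pderiv_mul, pderiv_X, Pi.single_apply, _root_.map_add, ih]
      split_ifs <;> simp_all

noncomputable def Hp (P : MvPolynomial (Fin n) ℝ) (i j : Fin n) : MvPolynomial (Fin n) ℝ :=
  pderiv i (pderiv j P)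

noncomputable def Tp (P : MvPolynomial (Fin n) ℝ) (i j k : Fin n) : MvPolynomial (Fin n) ℝ :=
  pderiv i (Hp P j k)

lemma Hp_symm (P : MvPolynomial (Fin n) ℝ) (i j : Fin n) : Hp P i j = Hp P j i := pd_comm i j P

lemma Tp_swap₁ (P : MvPolynomial (Fin n) ℝ) (i j k : Fin n) : Tp P i j k = Tp P j i k :=
  pd_comm i j (pderiv k P)

lemma Tp_swap₂ (P : MvPolynomial (Fin n) ℝ) (i j k : Fin n) : Tp P i j k = Tp P i k j :=
  congrArg (pderiv i) (pd_comm j k P)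

lemma DS (k : Fin n) : pderiv k (∑ i, (X i : MvPolynomial (Fin n) ℝ) ^ 2) = C 2 * X k := by
  rw [map_sum]
  have h : ∀ i : Fin n, pderiv k ((X i : MvPolynomial (Fin n) ℝ) ^ 2)
      = if i = k then C 2 * X k else 0 := by
    intro i
    rw [pderiv_pow, pderiv_X]
    rcases eq_or_ne i k with h | h
    · subst h
      rw [if_pos rfl, Pi.single_eq_same, mul_one, pow_one]
      norm_num
      exact (map_ofNat C 2).symm
    · rw [if_neg h, Pi.single_eq_of_ne h, mul_zero]
  rw [Finset.sum_congr rfl fun i _ => h i]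
  simp

lemma two_ne : (2 : MvPolynomial (Fin n) ℝ) ≠ 0 := by
  intro h
  have h2 := congrArg (eval (0 : Fin n → ℝ)) h
  rw [map_ofNat, _root_.map_zero] at h2
  norm_num at h2

section
variable (P : MvPolynomial (Fin n) ℝ)

lemma sumTkk (harmP : ∑ i, Hp P i i = 0) (i : Fin n) : ∑ k, Tp P k k i = 0 := by
  have h : ∀ k : Fin n, Tp P k k i = pderiv i (Hp P k k) := by
    intro k
    show pderiv k (pderiv k (pderiv i P)) = _
    rw [pd_comm k i P, pd_comm k i (pderiv k P)]
    rfl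
  rw [Finset.sum_congr rfl fun k _ => h k, ← map_sum, harmP, _root_.map_zero]

lemma sumDT (harmP : ∑ i, Hp P i i = 0) (i j : Fin n) :
    ∑ k, pderiv k (Tp P k i j) = 0 := by
  have h : ∀ k : Fin n, pderiv k (Tp P k i j) = pderiv i (pderiv j (Hp P k k)) := by
    intro k
    show pderiv k (pderiv k (pderiv i (pderiv j P))) = _
    rw [pd_comm k i (pderiv j P), pd_comm k i (pderiv k (pderiv j P)),
      pd_comm k j P, pd_comm k j (pderiv k P)]
    rfl
  rw [Finset.sum_congr rfl fun k _ => h k, ← map_sum, ← map_sum, harmP, _root_.map_zero, _root_.map_zero]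

lemma quadD (quadP : ∑ i, ∑ j, Hp P i j * Hp P j i = C β * ∑ i, X i ^ 2) (a : Fin n) :
    ∑ i, ∑ k, Tp P a i k * Hp P i k = C β * X a := by
  have h := congrArg (pderiv a) quadP
  rw [map_sum] at h
  rw [Finset.sum_congr rfl (fun i (_ : i ∈ Finset.univ) => map_sum (pderiv a) _ _)] at h
  rw [pderiv_C_mul, DS a] at h
  have h2 : ∀ i j : Fin n, pderiv a (Hp P i j * Hp P j i) = 2 * (Tp P a i j * Hp P i j) := by
    intro i j
    rw [pderiv_mul]
    show Tp P a i j * Hp P j i + Hp P i j * Tp P a j i = _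
    rw [Hp_symm P j i, Tp_swap₂ P a j i]
    ring
  rw [Finset.sum_congr rfl fun i _ => Finset.sum_congr rfl fun j _ => h2 i j] at h
  simp only [← Finset.mul_sum] at h
  have h3 : (2 : MvPolynomial (Fin n) ℝ) * (∑ i, ∑ k, Tp P a i k * Hp P i k)
      = 2 * (C β * X a) := by
    rw [h, (map_ofNat C 2 : C (2:ℝ) = _)]
    ring
  exact mul_left_cancel₀ two_ne h3

end

variable {n : ℕ}

lemma euler_mono (s : Fin n →₀ ℕ) (a : ℝ) :
    ∑ i, X i * pderiv i (monomial s a) = monomial s (a * ∑ i, (s i : ℝ)) := by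
  have h : ∀ i : Fin n, X i * pderiv i (monomial s a) = monomial s (a * s i) := by
    intro i
    rw [pderiv_monomial, X, monomial_mul]
    rcases Nat.eq_zero_or_pos (s i) with h0 | h0
    · simp [h0]
    · rw [one_mul, add_tsub_cancel_of_le]
      rwa [Finsupp.single_le_iff]
  rw [Finset.sum_congr rfl fun i _ => h i, ← map_sum, ← Finset.mul_sum]

lemma euler (P : MvPolynomial (Fin n) ℝ) (h : P.IsHomogeneous 3) :
    ∑ i, X i * pderiv i P = C 3 * P := by
  conv_lhs => rw [P.as_sum]
  simp only [map_sum, Finset.mul_sum]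
  rw [Finset.sum_comm]
  rw [Finset.sum_congr rfl (fun s _ => euler_mono s (coeff s P))]
  conv_rhs => rw [P.as_sum]
  rw [Finset.mul_sum]
  refine Finset.sum_congr rfl fun s hs => ?_
  have hd := h (MvPolynomial.mem_support_iff.mp hs)
  have hsum : ∑ i, (s i : ℝ) = 3 := by
    have h2 : ∑ i, s i = 3 := by
      rw [← hd]
      rw [Finsupp.weight_apply]
      rw [Finsupp.sum_fintype _ _ (fun i => by simp)]
      simp
    exact_mod_cast congrArg (Nat.cast : ℕ → ℝ) h2
  rw [hsum, C_mul_monomial, mul_comm]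

theorem key (P : MvPolynomial (Fin n) ℝ) (lam β : ℝ)
    (hhom : P.IsHomogeneous 3)
    (harmP : ∑ i, Hp P i i = 0)
    (eigP : ∑ i, ∑ j, pderiv i P * Hp P i j * pderiv j P
      = C (-lam) * ((∑ i, X i ^ 2) * P))
    (quadP : ∑ i, ∑ j, Hp P i j * Hp P j i = C β * ∑ i, X i ^ 2) :
    ∑ i, ∑ j, ∑ k, Hp P i j * Hp P j k * Hp P k i
      = C (-(((n : ℝ) + 6) * lam + 6 * β)) * P := by
  have hpG : ∀ a b : Fin n, pderiv a (pderiv b P) = Hp P a b := fun _ _ => rfl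
  have hpH : ∀ a b c : Fin n, pderiv a (Hp P b c) = Tp P a b c := fun _ _ _ => rfl
  -- step 1 : first derivative of the LHS of eigP
  have step1 : ∀ k, pderiv k (∑ i, ∑ j, pderiv i P * Hp P i j * pderiv j P)
      = ∑ i, ∑ j, (Hp P k i * Hp P i j * pderiv j P + pderiv i P * Tp P k i j * pderiv j P
          + pderiv i P * Hp P i j * Hp P k j) := by
    intro k
    rw [map_sum]
    refine Finset.sum_congr rfl fun i _ => ?_
    rw [map_sum]
    refine Finset.sum_congr rfl fun j _ => ?_
    simp only [pderiv_mul, hpG, hpH]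
    ring
  -- step 2 : second derivative
  have step2 : ∀ k, pderiv k (∑ i, ∑ j, (Hp P k i * Hp P i j * pderiv j P
        + pderiv i P * Tp P k i j * pderiv j P + pderiv i P * Hp P i j * Hp P k j))
      = ∑ i, ∑ j,
        (Tp P k k i * Hp P i j * pderiv j P
        + Hp P k i * Tp P k i j * pderiv j P
        + Hp P k i * Hp P i j * Hp P k j
        + Hp P k i * Tp P k i j * pderiv j P
        + pderiv i P * pderiv k (Tp P k i j) * pderiv j P
        + pderiv i P * Tp P k i j * Hp P k j
        + Hp P k i * Hp P i j * Hp P k j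
        + pderiv i P * Tp P k i j * Hp P k j
        + pderiv i P * Hp P i j * Tp P k k j) := by
    intro k
    rw [map_sum]
    refine Finset.sum_congr rfl fun i _ => ?_
    rw [map_sum]
    refine Finset.sum_congr rfl fun j _ => ?_
    simp only [_root_.map_add, pderiv_mul, hpG, hpH]
    ring
  -- the nine triple sums
  have E1 : (∑ k, ∑ i, ∑ j, Tp P k k i * Hp P i j * pderiv j P) = 0 := by
    rw [Finset.sum_comm]
    refine Finset.sum_eq_zero fun i _ => ?_
    rw [Finset.sum_comm]
    refine Finset.sum_eq_zero fun j _ => ?_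
    simp only [mul_assoc]
    rw [← Finset.sum_mul, sumTkk P harmP i, zero_mul]
  have E9 : (∑ k, ∑ i, ∑ j, pderiv i P * Hp P i j * Tp P k k j) = 0 := by
    rw [Finset.sum_comm]
    refine Finset.sum_eq_zero fun i _ => ?_
    rw [Finset.sum_comm]
    refine Finset.sum_eq_zero fun j _ => ?_
    rw [← Finset.mul_sum, sumTkk P harmP j, mul_zero]
  have E5 : (∑ k, ∑ i, ∑ j, pderiv i P * pderiv k (Tp P k i j) * pderiv j P) = 0 := by
    rw [Finset.sum_comm]
    refine Finset.sum_eq_zero fun i _ => ?_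
    rw [Finset.sum_comm]
    refine Finset.sum_eq_zero fun j _ => ?_
    have h : ∀ k : Fin n, pderiv i P * pderiv k (Tp P k i j) * pderiv j P
        = pderiv i P * pderiv j P * pderiv k (Tp P k i j) := fun k => by ring
    rw [Finset.sum_congr rfl fun k _ => h k, ← Finset.mul_sum, sumDT P harmP i j, mul_zero]
  have E2 : (∑ k, ∑ i, ∑ j, Hp P k i * Tp P k i j * pderiv j P)
      = C β * (C 3 * P) := by
    have hTT : ∀ k i j : Fin n, Hp P k i * Tp P k i j * pderiv j P
        = Tp P j i k * Hp P i k * pderiv j P := by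
      intro k i j
      rw [Hp_symm P k i, Tp_swap₁ P k i j, Tp_swap₂ P i k j, Tp_swap₁ P i j k]
      ring
    rw [Finset.sum_congr rfl fun k _ => Finset.sum_congr rfl fun i _ =>
      Finset.sum_congr rfl fun j _ => hTT k i j]
    rw [Finset.sum_comm]
    rw [Finset.sum_congr rfl fun i (_ : i ∈ Finset.univ) => Finset.sum_comm]
    rw [Finset.sum_comm]
    have h2 : ∀ j : Fin n, (∑ i, ∑ k, Tp P j i k * Hp P i k * pderiv j P)
        = C β * (X j * pderiv j P) := by
      intro j
      rw [show (∑ i, ∑ k, Tp P j i k * Hp P i k * pderiv j P)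
          = (∑ i, ∑ k, Tp P j i k * Hp P i k) * pderiv j P by
        rw [Finset.sum_mul]
        exact Finset.sum_congr rfl fun i _ => by rw [Finset.sum_mul]]
      rw [quadD P quadP j]
      ring
    rw [Finset.sum_congr rfl fun j _ => h2 j, ← Finset.mul_sum, euler P hhom]
  have E6 : (∑ k, ∑ i, ∑ j, pderiv i P * Tp P k i j * Hp P k j)
      = C β * (C 3 * P) := by
    have hTT : ∀ k i j : Fin n, pderiv i P * Tp P k i j * Hp P k j
        = pderiv i P * (Tp P i k j * Hp P k j) := by
      intro k i j
      rw [Tp_swap₁ P k i j, mul_assoc]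
    rw [Finset.sum_congr rfl fun k _ => Finset.sum_congr rfl fun i _ =>
      Finset.sum_congr rfl fun j _ => hTT k i j]
    rw [Finset.sum_comm]
    have h2 : ∀ i : Fin n, (∑ k, ∑ j, pderiv i P * (Tp P i k j * Hp P k j))
        = C β * (X i * pderiv i P) := by
      intro i
      rw [show (∑ k, ∑ j, pderiv i P * (Tp P i k j * Hp P k j))
          = pderiv i P * (∑ k, ∑ j, Tp P i k j * Hp P k j) by
        rw [Finset.mul_sum]
        exact Finset.sum_congr rfl fun k _ => by rw [Finset.mul_sum]]
      rw [quadD P quadP i]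
      ring
    rw [Finset.sum_congr rfl fun i _ => h2 i, ← Finset.mul_sum, euler P hhom]
  have E3 : (∑ k, ∑ i, ∑ j, Hp P k i * Hp P i j * Hp P k j)
      = ∑ i, ∑ j, ∑ k, Hp P i j * Hp P j k * Hp P k i := by
    refine Finset.sum_congr rfl fun k _ => Finset.sum_congr rfl fun i _ =>
      Finset.sum_congr rfl fun j _ => ?_
    rw [Hp_symm P k j]
  -- second derivative of the RHS of eigP
  have stepR : ∀ k : Fin n, pderiv k (pderiv k (C (-lam) * ((∑ i, X i ^ 2) * P)))
      = C (-lam) * (C 2 * P + C 2 * X k * pderiv k P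
        + (C 2 * X k * pderiv k P + (∑ i, X i ^ 2) * Hp P k k)) := by
    intro k
    simp only [pderiv_mul, pderiv_C, _root_.map_add, DS, pderiv_X_self, hpG, zero_mul,
      mul_one, add_zero, zero_add]
  have hR : (∑ k, (C (-lam) * (C 2 * P + C 2 * X k * pderiv k P
        + (C 2 * X k * pderiv k P + (∑ i, X i ^ 2) * Hp P k k))))
      = C (-lam) * (C (n : ℝ) * (C 2 * P) + C 2 * (C 3 * P) + C 2 * (C 3 * P)) := by
    rw [← Finset.mul_sum]
    congr 1
    simp only [Finset.sum_add_distrib]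
    rw [Finset.sum_const, Finset.card_univ, Fintype.card_fin, nsmul_eq_mul,
      ← map_natCast (C : ℝ →+* MvPolynomial (Fin n) ℝ) n]
    have h1 : ∀ k : Fin n, C 2 * X k * pderiv k P
        = C 2 * (X k * pderiv k P) := fun k => by ring
    rw [Finset.sum_congr rfl fun k _ => h1 k, ← Finset.mul_sum, euler P hhom,
      ← Finset.mul_sum, harmP, mul_zero, add_zero]
  -- apply the Laplacian to eigP
  have hΔ := congrArg (fun q => ∑ k, pderiv k (pderiv k q)) eigP
  rw [Finset.sum_congr rfl fun k (_ : k ∈ Finset.univ) => by rw [step1 k, step2 k],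
    Finset.sum_congr rfl fun k (_ : k ∈ Finset.univ) => stepR k, hR] at hΔ
  simp only [Finset.sum_add_distrib] at hΔ
  rw [E1, E2, E3, E5, E6, E9] at hΔ
  have h2Q : 2 * (∑ i, ∑ j, ∑ k, Hp P i j * Hp P j k * Hp P k i)
      = 2 * (C (-(((n : ℝ) + 6) * lam + 6 * β)) * P) := by
    simp only [_root_.map_neg, _root_.map_add, _root_.map_mul, map_ofNat] at hΔ ⊢
    linear_combination hΔ
  exact mul_left_cancel₀ two_ne h2Q


lemma hasFDerivAt_eval (p : MvPolynomial (Fin n) ℝ) (x : Fin n → ℝ) :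
    HasFDerivAt (fun y => eval y p)
      (∑ i, eval x (pderiv i p) • (ContinuousLinearMap.proj i : (Fin n → ℝ) →L[ℝ] ℝ)) x := by
  induction p using MvPolynomial.induction_on with
  | C a =>
      simpa [pderiv_C] using hasFDerivAt_const (𝕜 := ℝ) a x
  | add p q hp hq =>
      have := hp.add hq
      convert this using 1
      case e'_11 => funext y; simp
      case e'_12 => simp [_root_.map_add, add_smul, Finset.sum_add_distrib]
      all_goals rfl
  | mul_X p k ih =>
      have hk : HasFDerivAt (fun y : Fin n → ℝ => y k)
          (ContinuousLinearMap.proj k : (Fin n → ℝ) →L[ℝ] ℝ) x :=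
        (ContinuousLinearMap.proj k : (Fin n → ℝ) →L[ℝ] ℝ).hasFDerivAt
      have := ih.mul hk
      convert this using 1
      case e'_11 => funext y; simp
      case e'_12 =>
        ext v
        simp only [ContinuousLinearMap.sum_apply, ContinuousLinearMap.smul_apply,
          ContinuousLinearMap.add_apply, ContinuousLinearMap.proj_apply, smul_eq_mul,
          pderiv_mul, pderiv_X, _root_.map_add, eval_mul, eval_X, Pi.single_apply, eval_add]
        simp only [apply_ite (eval x), _root_.map_one, _root_.map_zero, mul_ite, mul_one, mul_zero,
          ite_mul, zero_mul, add_mul, Finset.sum_add_distrib, Finset.sum_ite_eq, Finset.mem_univ,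
          if_true, Finset.mul_sum]
        rw [add_comm]
        congr 1
        exact Finset.sum_congr rfl fun i _ => by ring
      all_goals rfl

lemma fderiv_eval (p : MvPolynomial (Fin n) ℝ) (x : Fin n → ℝ) (i : Fin n) :
    fderiv ℝ (fun y => eval y p) x (Pi.single i 1) = eval x (pderiv i p) := by
  rw [(hasFDerivAt_eval p x).fderiv]
  simp [Pi.single_apply, mul_ite, Finset.sum_ite_eq']

end CubicAux

open MvPolynomial CubicAux in
/-- Let `f` be a homogeneous cubic polynomial on `ℝⁿ` which is harmonic and
satisfies `(∇f)ᵀ Hess(f) ∇f = −λ|x|² f` and `trace (Hess f)² = β|x|²`. Then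
`trace (Hess f)³ = −((n+6)λ + 6β) f`. -/
theorem cubic_trace_from_quadratic_trace (n : ℕ)
    (P : MvPolynomial (Fin n) ℝ) (lam β : ℝ)
    (hhom : P.IsHomogeneous 3)
    (f : (Fin n → ℝ) → ℝ) (hf : f = fun x => MvPolynomial.eval x P)
    (hharm : ∀ x, Matrix.trace (hessian f x) = 0)
    (heig : ∀ x, (∑ i, ∑ j, grad f x i * hessian f x i j * grad f x j)
      = -lam * (∑ i, x i ^ 2) * f x)
    (hquad : ∀ x, Matrix.trace (hessian f x ^ 2) = β * ∑ i, x i ^ 2) :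
    ∀ x, Matrix.trace (hessian f x ^ 3) = -(((n : ℝ) + 6) * lam + 6 * β) * f x := by
  subst hf
  have hG : ∀ (y : Fin n → ℝ) (i : Fin n),
      grad (fun z => eval z P) y i = eval y (pderiv i P) := fun y i => fderiv_eval P y i
  have hHfun : ∀ j : Fin n,
      (fun y : Fin n → ℝ => fderiv ℝ (fun z => eval z P) y (Pi.single j 1))
        = fun y => eval y (pderiv j P) := fun j => funext fun y => fderiv_eval P y j
  have hH : ∀ (y : Fin n → ℝ) (i j : Fin n),
      hessian (fun z => eval z P) y i j = eval y (Hp P i j) := by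
    intro y i j
    show fderiv ℝ (fun y => fderiv ℝ (fun z => eval z P) y (Pi.single j 1)) y (Pi.single i 1) = _
    rw [hHfun j]
    exact fderiv_eval (pderiv j P) y i
  have harmP : ∑ i, Hp P i i = 0 := by
    apply MvPolynomial.funext
    intro y
    have h := hharm y
    simp only [Matrix.trace, Matrix.diag] at h
    rw [Finset.sum_congr rfl fun i _ => hH y i i] at h
    rw [map_sum, _root_.map_zero]
    exact h
  have quadP : ∑ i, ∑ j, Hp P i j * Hp P j i = C β * ∑ i, X i ^ 2 := by
    apply MvPolynomial.funext
    intro y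
    have h := hquad y
    simp only [sq, Matrix.trace, Matrix.diag, Matrix.mul_apply] at h
    rw [(Finset.sum_congr rfl fun i _ => Finset.sum_congr rfl fun j _ => by
      rw [hH y i j, hH y j i] :
      (∑ i, ∑ j, hessian (fun z => eval z P) y i j * hessian (fun z => eval z P) y j i) = _)] at h
    simp only [map_sum, _root_.map_mul, eval_C, eval_pow, eval_X]
    rw [h]
    ring
  have eigP : ∑ i, ∑ j, pderiv i P * Hp P i j * pderiv j P
      = C (-lam) * ((∑ i, X i ^ 2) * P) := by
    apply MvPolynomial.funext
    intro y
    have h := heig y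
    rw [(Finset.sum_congr rfl fun i _ => Finset.sum_congr rfl fun j _ => by
      rw [hG y i, hG y j, hH y i j] :
      (∑ i, ∑ j, grad (fun z => eval z P) y i * hessian (fun z => eval z P) y i j
        * grad (fun z => eval z P) y j) = _)] at h
    simp only [map_sum, _root_.map_mul, eval_C, eval_pow, eval_X]
    rw [h]
    ring
  have hkey := key P lam β hhom harmP eigP quadP
  intro x
  have h3 : Matrix.trace (hessian (fun z => eval z P) x ^ 3)
      = ∑ i, ∑ j, ∑ k, hessian (fun z => eval z P) x i k * hessian (fun z => eval z P) x k j
          * hessian (fun z => eval z P) x j i := by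
    rw [pow_succ, sq]
    simp only [Matrix.trace, Matrix.diag, Matrix.mul_apply, Finset.sum_mul]
  rw [h3]
  rw [Finset.sum_congr rfl fun i (_ : i ∈ Finset.univ) => Finset.sum_comm]
  have h4 := congrArg (eval x) hkey
  simp only [map_sum, _root_.map_mul, eval_C] at h4
  rw [(Finset.sum_congr rfl fun i _ => Finset.sum_congr rfl fun j _ =>
    Finset.sum_congr rfl fun k _ => by
      rw [hH x i j, hH x j k, hH x k i] :
    (∑ i, ∑ j, ∑ k, hessian (fun z => eval z P) x i j * hessian (fun z => eval z P) x j k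
      * hessian (fun z => eval z P) x k i) = _)]
  exact h4
end

section
/- Suppose the dimensions of a normal form of a radial eigencubic satisfy n₃ = 2n₁ + n₂ − 2 and n = 3n₁ + 2n₂ − 1 with n₁, n₂, n₃ nonnegative integers, n₂ ∈ {0,5,8,14,26}, and n₁ − 1 ≤ ρ(n₂ + n₁ − 1). Then (n₁, n₂) is one of exactly 23 pairs; in particular n₁ ≤ 2n₂ + 17. -/
private lemma aux16 : ∀ a : ℕ, 1 ≤ a → 16 * a ≤ 2 ^ (4 * a) := by
  intro a ha
  induction a with
  | zero => omega
  | succ a ih =>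
    rcases Nat.eq_or_lt_of_le ha with h | h
    · simp [← h]
    · have h1 : 1 ≤ a := by omega
      have h2 := ih h1
      have h3 : (16 : ℕ) ≤ 2 ^ (4 * a) := by
        calc (16:ℕ) = 16 * 1 := by ring
        _ ≤ 16 * a := by omega
        _ ≤ 2 ^ (4 * a) := h2
      have h4 : 4 * (a + 1) = 4 * a + 4 := by ring
      rw [h4, pow_add]
      omega

private lemma auxRho : ∀ a b : ℕ, b ≤ 3 → 16 * a + 2 ^ (b + 1) ≤ 2 ^ (4 * a + b) + 16 := by
  intro a b hb
  rcases Nat.eq_zero_or_pos a with rfl | ha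
  · interval_cases b <;> norm_num
  · have h1 := aux16 a ha
    have h2 : (2:ℕ) ^ (4 * a) ≤ 2 ^ (4 * a + b) := Nat.pow_le_pow_right (by norm_num) (by omega)
    have h3 : (2:ℕ) ^ (b + 1) ≤ 16 := by
      calc (2:ℕ) ^ (b + 1) ≤ 2 ^ 4 := Nat.pow_le_pow_right (by norm_num) (by omega)
      _ = 16 := by norm_num
    omega

/-- Suppose nonnegative integers `n₁, n₂, n₃, n` satisfy `n₃ = 2n₁ + n₂ − 2`,
`n = 3n₁ + 2n₂ − 1`, `n₂ ∈ {0,5,8,14,26}`, and the Hurwitz–Radon constraint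
`n₁ − 1 ≤ ρ(n₂ + n₁ − 1)` (expressed via the decomposition
`n₂ + n₁ − 1 = 2^(4a+b)·k` with `k` odd, `b ≤ 3`, `ρ = 8a + 2^b`). Then
`(n₁, n₂)` is one of exactly 23 pairs; in particular `n₁ ≤ 2n₂ + 17`. -/
theorem exceptional_types_finite (n₁ n₂ n₃ n : ℤ)
    (h₁ : 0 ≤ n₁) (h₂ : 0 ≤ n₂) (h₃ : 0 ≤ n₃) (hn : 0 ≤ n)
    (hdim₃ : n₃ = 2 * n₁ + n₂ - 2)
    (hdim : n = 3 * n₁ + 2 * n₂ - 1)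
    (hn₂ : n₂ = 0 ∨ n₂ = 5 ∨ n₂ = 8 ∨ n₂ = 14 ∨ n₂ = 26)
    (hrho : ∃ a b k : ℕ, Odd k ∧ b ≤ 3 ∧
      n₂ + n₁ - 1 = 2 ^ (4 * a + b) * (k : ℤ) ∧
      n₁ - 1 ≤ 8 * (a : ℤ) + 2 ^ b) :
    ((n₁, n₂) ∈ ({(2,0), (3,0), (5,0), (9,0),
        (0,5), (1,5), (2,5), (4,5),
        (0,8), (1,8), (2,8), (3,8), (5,8), (9,8),
        (0,14), (1,14), (2,14), (3,14),
        (0,26), (1,26), (2,26), (3,26), (7,26)} : Set (ℤ × ℤ))) ∧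
    n₁ ≤ 2 * n₂ + 17 := by
  obtain ⟨a, b, k, hk, hb, heq, hle⟩ := hrho
  obtain ⟨j, rfl⟩ := hk
  have hk1 : (1:ℤ) ≤ ((2 * j + 1 : ℕ) : ℤ) := by push_cast; omega
  have hpowpos : (0:ℤ) < 2 ^ (4 * a + b) := by positivity
  have hpow : (2:ℤ) ^ (4 * a + b) ≤ n₂ + n₁ - 1 := by
    rw [heq]; nlinarith
  have haux : (16 * (a:ℤ) + 2 ^ (b + 1)) ≤ 2 ^ (4 * a + b) + 16 := by
    exact_mod_cast auxRho a b hb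
  have hpb : (2:ℤ) ^ (b + 1) = 2 * 2 ^ b := by rw [pow_succ]; ring
  have hbound : n₁ ≤ n₂ + 17 := by nlinarith [hle, hpow, haux]
  have hn2' : n₂ ≤ 26 := by rcases hn₂ with rfl | rfl | rfl | rfl | rfl <;> norm_num
  have ha1 : a ≤ 1 := by
    by_contra h
    push_neg at h
    have h8 : (2:ℤ) ^ 8 ≤ 2 ^ (4 * a + b) := by
      apply pow_le_pow_right₀ (by norm_num)
      omega
    norm_num at h8
    omega
  refine ⟨?_, by omega⟩
  simp only [Set.mem_insert_iff, Set.mem_singleton_iff, Prod.mk.injEq]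
  rcases hn₂ with rfl | rfl | rfl | rfl | rfl <;>
    interval_cases a <;> interval_cases b <;>
    norm_num at heq hle ⊢ <;> omega
end
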